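/- Under the same hypotheses as above, assume additionally x/|x| ∈ S_ε := {θ ∈ S^{n-1} : |Ω_ε(θ)| > ε} and ∫ g ≥ 1 − ε. Then ∫_{B(0,r)} |Ω_ε((x−y)/|x−y|)| |x−y|^{-n} g(y) dy ≥ (1−ε)(|Ω_ε(x/|x|)| − ε) / ((1+√ε)^n |x|^n), and moreover Ω_ε((x−y)/|x−y|) has constant sign for y ∈ B(0,r), so the same lower bound holds for |T_{Ω_ε}(g)(x)| = |∫_{B(0,r)} Ω_ε((x−y)/|x−y|) |x−y|^{-n} g(y) dy|. -/

import Mathlib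

open MeasureTheory Metric Set ENNReal

noncomputable def sphereMeasure (n : ℕ) :
    Measure (sphere (0 : EuclideanSpace ℝ (Fin n)) 1) :=
  (volume : Measure (EuclideanSpace ℝ (Fin n))).toSphere


open Classical in
noncomputable def projSphere {n : ℕ} (hn : 1 ≤ n) (x : EuclideanSpace ℝ (Fin n)) :
    sphere (0 : EuclideanSpace ℝ (Fin n)) 1 :=
  if h : x = 0 then
    ⟨EuclideanSpace.single (⟨0, hn⟩ : Fin n) (1 : ℝ), by
      simp [mem_sphere_zero_iff_norm, EuclideanSpace.norm_single]⟩
  else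
    ⟨‖x‖⁻¹ • x, by
      simp [mem_sphere_zero_iff_norm, norm_smul, abs_of_nonneg,
        inv_mul_cancel₀ (norm_ne_zero_iff.mpr h)]⟩

/-! On the ball `B(0, r)` the kernel `|Ω((x - y)/|x - y|)| |x - y|⁻ⁿ` is pinched between
`(|Ω(x/|x|)| - ε) / ((1 + √ε)|x|)ⁿ` and `(|Ω(x/|x|)| + ε) / ((1 - √ε)|x|)ⁿ`. The lower bound,
integrated against `g`, gives the first estimate; the upper bound only serves to make the integrand
integrable. Since `|Ω((x - y)/|x - y|) - Ω(x/|x|)| < ε < |Ω(x/|x|)|`, the values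
`Ω((x - y)/|x - y|)` all have the sign of `Ω(x/|x|)`, so the integral of the absolute kernel is,
up to that sign, the integral of the kernel itself. -/

@[fun_prop]
lemma measurable_projSphere {n : ℕ} (hn : 1 ≤ n) : Measurable (projSphere hn) := by
  classical
  have hcoe : (fun x ↦ (projSphere hn x : EuclideanSpace ℝ (Fin n))) =
      fun x ↦ if x = 0 then EuclideanSpace.single (⟨0, hn⟩ : Fin n) (1 : ℝ) else ‖x‖⁻¹ • x := by
    funext x
    by_cases h : x = 0 <;> simp [projSphere, h]
  have hmeas : Measurable fun x ↦ (projSphere hn x : EuclideanSpace ℝ (Fin n)) := by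
    rw [hcoe]
    exact Measurable.ite measurableSet_eq measurable_const
      (measurable_norm.inv.smul measurable_id)
  exact hmeas.subtype_mk

lemma abs_mul_rpow_neg_natCast_mem_Icc {ε t d u v : ℝ} (n : ℕ) (hε : ε < 1)
    (huv : |u - v| < ε) (hlo : (1 - √ε) * t < d) (hhi : d < (1 + √ε) * t) :
    |u| * d ^ (-(n : ℝ)) ∈
      Icc ((|v| - ε) / ((1 + √ε) * t) ^ n) ((|v| + ε) / ((1 - √ε) * t) ^ n) := by
  have hsqrt : √ε < 1 := (Real.sqrt_lt' one_pos).mpr (by simpa using hε)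
  have ht : 0 < t := by nlinarith [Real.sqrt_nonneg ε]
  have hlo_pos : 0 < (1 - √ε) * t := mul_pos (by linarith) ht
  have hd : 0 < d := hlo_pos.trans hlo
  have huv' := abs_sub_abs_le_abs_sub u v
  have hvu := abs_sub_abs_le_abs_sub v u
  rw [abs_sub_comm] at hvu
  rw [Real.rpow_neg hd.le, Real.rpow_natCast, ← div_eq_mul_inv]
  exact ⟨div_le_div₀ (abs_nonneg u) (by linarith) (pow_pos hd n)
      (pow_le_pow_left₀ hd.le hhi.le n),
    div_le_div₀ (by linarith [abs_nonneg u]) (by linarith) (pow_pos hlo_pos n)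
      (pow_le_pow_left₀ hlo_pos.le hlo.le n)⟩

section Integral

variable {α : Type*} [MeasurableSpace α] {μ : Measure α} {s : Set α}

lemma mul_setIntegral_le_setIntegral_mul {F g : α → ℝ} {c C : ℝ} (hs : MeasurableSet s)
    (hF : AEStronglyMeasurable F (μ.restrict s)) (hg : IntegrableOn g s μ)
    (hg0 : ∀ y ∈ s, 0 ≤ g y) (hcF : ∀ y ∈ s, c ≤ F y) (hFC : ∀ y ∈ s, F y ≤ C) :
    c * ∫ y in s, g y ∂μ ≤ ∫ y in s, F y * g y ∂μ := by
  have hFg : IntegrableOn (fun y ↦ F y * g y) s μ := by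
    refine hg.bdd_mul hF (c := max |c| |C|) ?_
    filter_upwards [ae_restrict_mem hs] with y hy
    exact abs_le_max_abs_abs (hcF y hy) (hFC y hy)
  rw [← integral_const_mul]
  exact setIntegral_mono_on (hg.const_mul c) hFg hs
    fun y hy ↦ mul_le_mul_of_nonneg_right (hcF y hy) (hg0 y hy)

lemma setIntegral_abs_mul_le_abs_setIntegral_mul {f k : α → ℝ} {v : ℝ} (hs : MeasurableSet s)
    (hf : ∀ y ∈ s, |f y - v| < |v|) :
    ∫ y in s, |f y| * k y ∂μ ≤ |∫ y in s, f y * k y ∂μ| := by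
  by_cases hv : 0 ≤ v
  · have hpos : ∀ y ∈ s, 0 ≤ f y := fun y hy ↦ by
      linarith [(abs_lt.mp (hf y hy)).1, abs_of_nonneg hv]
    rw [setIntegral_congr_fun hs fun y hy ↦ by rw [abs_of_nonneg (hpos y hy)]]
    exact le_abs_self _
  · have hneg : ∀ y ∈ s, f y < 0 := fun y hy ↦ by
      linarith [(abs_lt.mp (hf y hy)).2, abs_of_neg (not_le.mp hv)]
    rw [setIntegral_congr_fun hs fun y hy ↦ by rw [abs_of_neg (hneg y hy), neg_mul],
      integral_neg]
    exact neg_le_abs _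

end Integral

theorem stmt_19_general {n : ℕ} (hn : 1 ≤ n) (ε r R : ℝ) (hε1 : ε < 1)
    (Ωe : sphere (0 : EuclideanSpace ℝ (Fin n)) 1 → ℝ) (hcont : Continuous Ωe)
    (hker : ∀ x y : EuclideanSpace ℝ (Fin n), R < ‖x‖ → ‖y‖ ≤ r →
      |Ωe (projSphere hn (x - y)) - Ωe (projSphere hn x)| < ε ∧
      (1 - Real.sqrt ε) * ‖x‖ < ‖x - y‖ ∧ ‖x - y‖ < (1 + Real.sqrt ε) * ‖x‖)
    (g : EuclideanSpace ℝ (Fin n) → ℝ) (hgint : Integrable g)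
    (hg0 : ∀ y, 0 ≤ g y) (hsupp : Function.support g ⊆ ball (0 : EuclideanSpace ℝ (Fin n)) r)
    (hgge : 1 - ε ≤ ∫ y, g y)
    (x : EuclideanSpace ℝ (Fin n)) (hx : R < ‖x‖)
    (hbig : ε < |Ωe (projSphere hn x)|) :
    (1 - ε) * (|Ωe (projSphere hn x)| - ε) / ((1 + Real.sqrt ε) ^ n * ‖x‖ ^ n) ≤
      (∫ y in ball (0 : EuclideanSpace ℝ (Fin n)) r,
        |Ωe (projSphere hn (x - y))| * ‖x - y‖ ^ (-(n : ℝ)) * g y) ∧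
    (1 - ε) * (|Ωe (projSphere hn x)| - ε) / ((1 + Real.sqrt ε) ^ n * ‖x‖ ^ n) ≤
      |∫ y in ball (0 : EuclideanSpace ℝ (Fin n)) r,
        Ωe (projSphere hn (x - y)) * ‖x - y‖ ^ (-(n : ℝ)) * g y| := by
  set v := Ωe (projSphere hn x)
  have hker_ball (y) (hy : y ∈ ball (0 : EuclideanSpace ℝ (Fin n)) r) :=
    hker x y hx (mem_ball_zero_iff.mp hy).le
  have hbounds (y) (hy : y ∈ ball (0 : EuclideanSpace ℝ (Fin n)) r) :=
    abs_mul_rpow_neg_natCast_mem_Icc n hε1 (hker_ball y hy).1 (hker_ball y hy).2.1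
      (hker_ball y hy).2.2
  have hgball : ∫ y in ball 0 r, g y = ∫ y, g y :=
    setIntegral_eq_integral_of_forall_compl_eq_zero fun y hy ↦
      Function.notMem_support.mp fun hgy ↦ hy (hsupp hgy)
  have hlower : (1 - ε) * (|v| - ε) / ((1 + √ε) ^ n * ‖x‖ ^ n) ≤
      ∫ y in ball 0 r, |Ωe (projSphere hn (x - y))| * ‖x - y‖ ^ (-(n : ℝ)) * g y :=
    calc (1 - ε) * (|v| - ε) / ((1 + √ε) ^ n * ‖x‖ ^ n)
        = (|v| - ε) / ((1 + √ε) * ‖x‖) ^ n * (1 - ε) := by rw [mul_pow]; ring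
      _ ≤ (|v| - ε) / ((1 + √ε) * ‖x‖) ^ n * ∫ y in ball 0 r, g y := by
        rw [hgball]
        exact mul_le_mul_of_nonneg_left hgge (div_nonneg (by linarith) (by positivity))
      _ ≤ _ := mul_setIntegral_le_setIntegral_mul measurableSet_ball
          (Measurable.aestronglyMeasurable (by fun_prop)) hgint.integrableOn (fun y _ ↦ hg0 y)
          (fun y hy ↦ (hbounds y hy).1) (fun y hy ↦ (hbounds y hy).2)
  refine ⟨hlower, hlower.trans ?_⟩
  simp only [mul_assoc]
  exact setIntegral_abs_mul_le_abs_setIntegral_mul measurableSet_ball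
    fun y hy ↦ (hker_ball y hy).1.trans hbig

/-- Lower pointwise control of the singular integral on the set where |Ω_ε| > ε. -/
theorem stmt_19 {n : ℕ} (hn : 1 ≤ n) (ε r R : ℝ) (hε0 : 0 < ε) (hε1 : ε < 1) (hr : 0 < r)
    (Ωe : sphere (0 : EuclideanSpace ℝ (Fin n)) 1 → ℝ) (hcont : Continuous Ωe)
    (hker : ∀ x y : EuclideanSpace ℝ (Fin n), R < ‖x‖ → ‖y‖ ≤ r →
      |Ωe (projSphere hn (x - y)) - Ωe (projSphere hn x)| < ε ∧
      (1 - Real.sqrt ε) * ‖x‖ < ‖x - y‖ ∧ ‖x - y‖ < (1 + Real.sqrt ε) * ‖x‖)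
    (g : EuclideanSpace ℝ (Fin n) → ℝ) (hgint : Integrable g)
    (hg0 : ∀ y, 0 ≤ g y) (hsupp : Function.support g ⊆ ball (0 : EuclideanSpace ℝ (Fin n)) r)
    (hgle : ∫ y, g y ≤ 1) (hgge : 1 - ε ≤ ∫ y, g y)
    (x : EuclideanSpace ℝ (Fin n)) (hx : R < ‖x‖)
    (hbig : ε < |Ωe (projSphere hn x)|) :
    (1 - ε) * (|Ωe (projSphere hn x)| - ε) / ((1 + Real.sqrt ε) ^ n * ‖x‖ ^ n) ≤
      (∫ y in ball (0 : EuclideanSpace ℝ (Fin n)) r,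
        |Ωe (projSphere hn (x - y))| * ‖x - y‖ ^ (-(n : ℝ)) * g y) ∧
    (1 - ε) * (|Ωe (projSphere hn x)| - ε) / ((1 + Real.sqrt ε) ^ n * ‖x‖ ^ n) ≤
      |∫ y in ball (0 : EuclideanSpace ℝ (Fin n)) r,
        Ωe (projSphere hn (x - y)) * ‖x - y‖ ^ (-(n : ℝ)) * g y| :=
  stmt_19_general hn ε r R hε1 Ωe hcont hker g hgint hg0 hsupp hgge x hx hbig
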